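/- arXiv:2506.12660 — 4 statements merged into one kernel-verified Lean document; each statement's English description precedes it below -/
import Mathlib

section
/- No minimal imperfect graph contains a clique cutset. That is, if a graph G is not perfect but every proper induced subgraph of G is perfect, then G has no clique cutset. -/
/-!
If `C` is a clique cutset separating `V1` from `V2`, the proper induced subgraphs `G[V1 ∪ C]` and
`G[V2 ∪ C]` are perfect, hence `ω(G)`-colourable. Any colouring is injective on the clique `C`, so
after permuting the colours of one of them the two colourings agree on `C`; as no edge joins `V1`
to `V2`, they glue to an `ω(G)`-colouring of `G`. Thus `χ(G) = ω(G)`, which together with the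
perfection of every proper induced subgraph makes `G` perfect.
-/

open SimpleGraph

def IsPerfect {W : Type*} (G : SimpleGraph W) : Prop :=
  ∀ s : Set W, (G.induce s).chromaticNumber = ((G.induce s).cliqueNum : ℕ∞)

def GoodPartition {W : Type*} (G : SimpleGraph W) (s A B : Set W) : Prop :=
  A ∪ B = s ∧ Disjoint A B ∧ IsPerfect (G.induce A) ∧
    (G.induce B).cliqueNum < (G.induce s).cliqueNum

def PerfectlyDivisible {W : Type*} (G : SimpleGraph W) : Prop :=
  ∀ s : Set W, (G.induce s).edgeSet.Nonempty → ∃ A B : Set W, GoodPartition G s A B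

/-- Minimally non-perfectly divisible. -/
def MNPD {W : Type*} (G : SimpleGraph W) : Prop :=
  ¬ PerfectlyDivisible G ∧ ∀ s : Set W, s ≠ Set.univ → PerfectlyDivisible (G.induce s)

/-- `C` is a clique cutset of `G`: `C` is a clique and `G - C` is disconnected,
i.e. the remaining vertices split into two nonempty parts with no edges between them. -/
def IsCliqueCutset {W : Type*} (G : SimpleGraph W) (C : Set W) : Prop :=
  G.IsClique C ∧ ∃ V1 V2 : Set W, V1.Nonempty ∧ V2.Nonempty ∧ Disjoint V1 V2 ∧
    V1 ∪ V2 = Cᶜ ∧ ∀ x ∈ V1, ∀ y ∈ V2, ¬ G.Adj x y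

theorem Equiv.Perm.exists_comp_eq_of_injective {ι α : Type*} [Finite α] {f g : ι → α}
    (hf : f.Injective) (hg : g.Injective) : ∃ σ : Equiv.Perm α, ∀ i, σ (g i) = f i := by
  classical
  let e : Set.range g ≃ Set.range f := (Equiv.ofInjective g hg).symm.trans (Equiv.ofInjective f hf)
  refine ⟨e.extendSubtype, fun i => ?_⟩
  rw [Equiv.extendSubtype_apply_of_mem e (g i) ⟨i, rfl⟩]
  simp [e, Equiv.ofInjective_symm_apply]

namespace SimpleGraph

variable {V W : Type*} {G : SimpleGraph V} {H : SimpleGraph W}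

theorem Embedding.isNClique_map (f : G ↪g H) {n : ℕ} {s : Finset V} (hs : G.IsNClique n s) :
    H.IsNClique n (s.map f.toEmbedding) :=
  hs.map.mono ((map_le_iff_le_comap _ _ _).2 (comap_eq f).ge)

theorem Iso.cliqueNum_eq (e : G ≃g H) : G.cliqueNum = H.cliqueNum :=
  congrArg sSup <| Set.Subset.antisymm
    (fun _ ⟨_, hs⟩ => ⟨_, e.toEmbedding.isNClique_map hs⟩)
    (fun _ ⟨_, hs⟩ => ⟨_, e.symm.toEmbedding.isNClique_map hs⟩)

theorem Iso.chromaticNumber_eq (e : G ≃g H) : G.chromaticNumber = H.chromaticNumber :=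
  le_antisymm (chromaticNumber_mono_of_hom e.toEmbedding.toHom)
    (chromaticNumber_mono_of_hom e.symm.toEmbedding.toHom)

section Gluing

variable {S T : Set V}

theorem Coloring.exists_of_eqOn_inter {α : Type*} (hST : S ∪ T = Set.univ)
    (hcover : ∀ ⦃u v⦄, G.Adj u v → u ∈ S ∧ v ∈ S ∨ u ∈ T ∧ v ∈ T)
    (c : (G.induce S).Coloring α) (d : (G.induce T).Coloring α)
    (hcd : ∀ v (hS : v ∈ S) (hT : v ∈ T), c ⟨v, hS⟩ = d ⟨v, hT⟩) :
    Nonempty (G.Coloring α) := by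
  classical
  have hT : ∀ {v}, v ∉ S → v ∈ T := fun {v} hv =>
    ((Set.ext_iff.mp hST v).2 trivial).resolve_left hv
  refine ⟨Coloring.mk (fun v => if hv : v ∈ S then c ⟨v, hv⟩ else d ⟨v, hT hv⟩) ?_⟩
  intro u v huv
  by_cases hu : u ∈ S <;> by_cases hv : v ∈ S <;> simp only [hu, hv, dite_true, dite_false]
  · exact c.valid huv
  · rw [hcd u hu ((hcover huv).resolve_left fun h => hv h.2).1]
    exact d.valid huv
  · rw [hcd v hv ((hcover huv).resolve_left fun h => hu h.1).2]
    exact d.valid huv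
  · exact d.valid huv

theorem Colorable.of_induce_of_isClique_inter {n : ℕ} (hST : S ∪ T = Set.univ)
    (hcover : ∀ ⦃u v⦄, G.Adj u v → u ∈ S ∧ v ∈ S ∨ u ∈ T ∧ v ∈ T)
    (hclique : G.IsClique (S ∩ T)) (hS : (G.induce S).Colorable n)
    (hT : (G.induce T).Colorable n) : G.Colorable n := by
  obtain ⟨c⟩ := hS
  obtain ⟨d⟩ := hT
  have hadj : Pairwise fun x y : ↥(S ∩ T) => G.Adj x y := fun x y hxy =>
    hclique x.2 y.2 (Subtype.val_injective.ne hxy)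
  obtain ⟨σ, hσ⟩ := Equiv.Perm.exists_comp_eq_of_injective
    (c.injective_comp_of_pairwise_adj (fun x : ↥(S ∩ T) => ⟨x, x.2.1⟩) hadj)
    (d.injective_comp_of_pairwise_adj (fun x : ↥(S ∩ T) => ⟨x, x.2.2⟩) hadj)
  exact Coloring.exists_of_eqOn_inter hST hcover c (recolorOfEquiv _ σ d)
    fun v hvS hvT => (hσ ⟨v, hvS, hvT⟩).symm

end Gluing

end SimpleGraph

section Perfect

variable {V : Type*} {G : SimpleGraph V}

theorem IsPerfect.chromaticNumber_eq (h : IsPerfect G) : G.chromaticNumber = G.cliqueNum := by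
  simpa only [G.induceUnivIso.chromaticNumber_eq, G.induceUnivIso.cliqueNum_eq] using h Set.univ

theorem IsPerfect.colorable (h : IsPerfect G) : G.Colorable G.cliqueNum :=
  chromaticNumber_le_iff_colorable.mp h.chromaticNumber_eq.le

theorem isPerfect_of_colorable_of_forall_ne_univ (hG : G.Colorable G.cliqueNum)
    (h : ∀ s ≠ Set.univ, IsPerfect (G.induce s)) : IsPerfect G := by
  intro s
  obtain rfl | hs := eq_or_ne s Set.univ
  · rw [G.induceUnivIso.chromaticNumber_eq, G.induceUnivIso.cliqueNum_eq]
    exact le_antisymm hG.chromaticNumber_le G.cliqueNum_le_chromaticNumber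
  · exact (h s hs).chromaticNumber_eq

end Perfect

theorem IsCliqueCutset.exists_clique_separation {V : Type*} {G : SimpleGraph V} {C : Set V}
    (h : IsCliqueCutset G C) :
    ∃ S T : Set V, S ≠ Set.univ ∧ T ≠ Set.univ ∧ S ∪ T = Set.univ ∧ G.IsClique (S ∩ T) ∧
      ∀ ⦃u v⦄, G.Adj u v → u ∈ S ∧ v ∈ S ∨ u ∈ T ∧ v ∈ T := by
  obtain ⟨hC, V1, V2, ⟨v1, hv1⟩, ⟨v2, hv2⟩, hdis, hunion, hsep⟩ := h
  have hmem : ∀ v, v ∈ V1 ∨ v ∈ V2 ∨ v ∈ C := fun v => by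
    by_cases hv : v ∈ C
    · exact Or.inr (Or.inr hv)
    · exact (hunion.symm ▸ hv : v ∈ V1 ∪ V2).imp_right Or.inl
  have hnotC : ∀ {v}, v ∈ V1 ∪ V2 → v ∉ C := fun hv => by rwa [hunion] at hv
  refine ⟨V1 ∪ C, V2 ∪ C, ?_, ?_, ?_, ?_, ?_⟩
  · refine (Set.ne_univ_iff_exists_notMem _).2 ⟨v2, fun h => h.elim ?_ (hnotC (Or.inr hv2))⟩
    exact Set.disjoint_right.mp hdis hv2
  · refine (Set.ne_univ_iff_exists_notMem _).2 ⟨v1, fun h => h.elim ?_ (hnotC (Or.inl hv1))⟩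
    exact Set.disjoint_left.mp hdis hv1
  · exact Set.eq_univ_of_forall fun v => by rcases hmem v with hv | hv | hv <;> simp [hv]
  · rw [← Set.inter_union_distrib_right, hdis.inter_eq, Set.empty_union]
    exact hC
  · intro u v huv
    rcases hmem u with hu | hu | hu <;> rcases hmem v with hv | hv | hv <;>
      first
      | exact absurd huv (hsep u hu v hv)
      | exact absurd huv.symm (hsep v hv u hu)
      | simp [hu, hv]

/-- No minimal imperfect graph contains a clique cutset. -/
theorem no_clique_cutset_in_minimal_imperfect {V : Type*} [Fintype V] (G : SimpleGraph V)
    (himp : ¬ IsPerfect G)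
    (hmin : ∀ s : Set V, s ≠ Set.univ → IsPerfect (G.induce s)) :
    ∀ C : Set V, ¬ IsCliqueCutset G C := by
  intro C hC
  obtain ⟨S, T, hS, hT, hST, hclique, hcover⟩ := hC.exists_clique_separation
  have hcol : G.Colorable G.cliqueNum :=
    Colorable.of_induce_of_isClique_inter hST hcover hclique
      ((hmin S hS).colorable.mono (G.cliqueNum_induce_le S))
      ((hmin T hT).colorable.mono (G.cliqueNum_induce_le T))
  exact himp (isPerfect_of_colorable_of_forall_ne_univ hcol hmin)
end

section
/- A P5-free minimally non-perfectly divisible graph cannot contain a clique cutset. That is, if G is P5-free, G is not perfectly divisible, and every proper induced subgraph of G is perfectly divisible, then G has no clique cutset. -/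
open SimpleGraph

/-- `G` is `P₅`-free: no induced subgraph of `G` is isomorphic to the path on 5 vertices. -/
def P5Free {W : Type*} (G : SimpleGraph W) : Prop :=
  ∀ s : Set W, ¬ Nonempty (pathGraph 5 ≃g G.induce s)

/-!
Take a clique cutset `C` with sides `V₁`, `V₂` and `|C|` minimal. If a vertex `c ∈ C` has a
non-neighbour in `V₁` but is not mixed on any edge of `V₁`, then `c` can be moved to the `V₂` side
together with its neighbours in `V₁`, which gives a smaller clique cutset. Hence every `c ∈ C` that
is not complete to `V₁` is mixed on an edge `xy` of `V₁`, and likewise for `V₂`; a vertex mixed on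
edges of both sides would lie in the middle of an induced `P₅`. So `C = Ca ∪ Cb` with `Ca` complete
to `V₁` and `Cb` complete to `V₂`.

Now `S₁ = V₁ ∪ Cb` and `S₂ = V₂ ∪ Ca` partition `G`, and every edge between them meets one of the
cliques `Cb`, `Ca`, each complete to the other side. As `G` is MNPD, `G[S₁]` and `G[S₂]` have good
partitions `(A₁, B₁)` and `(A₂, B₂)`. Then `(A₁ ∪ A₂, B₁ ∪ B₂)` is a good partition of `G`:
colour `A₁` and `A₂` optimally with a common pool of free colours and private blocks for the clique
vertices of `Cb` and `Ca`, and note that a maximum clique of `B₁ ∪ B₂` meets one side only inside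
`Cb` or `Ca`, so it is beaten by a maximum clique of the other side.
-/

namespace SimpleGraph

variable {α β : Type*} {G : SimpleGraph α} {H : SimpleGraph β}

theorem IsClique.ncard_le_cliqueNum [Finite α] {s : Set α} (h : G.IsClique s) :
    s.ncard ≤ G.cliqueNum := by
  have := Fintype.ofFinite α
  classical
  rw [Set.ncard_eq_toFinset_card']
  exact IsClique.card_le_cliqueNum (tc := by simpa using h)

theorem exists_isClique_ncard_eq_cliqueNum (G : SimpleGraph α) :
    ∃ s : Set α, G.IsClique s ∧ s.ncard = G.cliqueNum := by
  obtain ⟨s, hs⟩ := G.exists_isNClique_cliqueNum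
  exact ⟨s, hs.isClique, by rw [Set.ncard_coe_finset, hs.card_eq]⟩

theorem Embedding.cliqueNum_le [Finite β] (f : G ↪g H) : G.cliqueNum ≤ H.cliqueNum := by
  obtain ⟨s, hs, hcard⟩ := G.exists_isClique_ncard_eq_cliqueNum
  rw [← hcard, ← Set.ncard_image_of_injective s f.injective]
  refine IsClique.ncard_le_cliqueNum ?_
  rintro _ ⟨x, hx, rfl⟩ _ ⟨y, hy, rfl⟩ hne
  exact f.map_adj_iff.2 (hs hx hy fun hxy => hne (hxy ▸ rfl))

theorem cliqueNum_congr [Finite α] [Finite β] (e : G ≃g H) : G.cliqueNum = H.cliqueNum :=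
  le_antisymm e.toEmbedding.cliqueNum_le e.symm.toEmbedding.cliqueNum_le

theorem ncard_le_cliqueNum_induce [Finite α] {s Q : Set α} (hQs : Q ⊆ s) (hQ : G.IsClique Q) :
    Q.ncard ≤ (G.induce s).cliqueNum := by
  have hQ' : (G.induce s).IsClique (Subtype.val ⁻¹' Q) := by
    rwa [isClique_induce_iff, Subtype.image_preimage_coe, Set.inter_eq_right.2 hQs]
  calc Q.ncard = (Subtype.val ⁻¹' Q : Set s).ncard :=
        (Set.ncard_preimage_of_injective_subset_range Subtype.val_injective
          (by rwa [Subtype.range_coe])).symm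
    _ ≤ (G.induce s).cliqueNum := hQ'.ncard_le_cliqueNum

theorem exists_isClique_ncard_eq_cliqueNum_induce (G : SimpleGraph α) (s : Set α) :
    ∃ Q ⊆ s, G.IsClique Q ∧ Q.ncard = (G.induce s).cliqueNum := by
  obtain ⟨T, hT, hcard⟩ := (G.induce s).exists_isClique_ncard_eq_cliqueNum
  exact ⟨Subtype.val '' T, Subtype.coe_image_subset s T, isClique_induce_iff.1 hT,
    by rw [Set.ncard_image_of_injective T Subtype.val_injective, hcard]⟩

theorem cliqueNum_induce_add_ncard_le [Finite α] {s A K : Set α} (hA : A ⊆ s) (hK : K ⊆ s)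
    (hAK : Disjoint A K) (hKc : G.IsClique K) (hadj : ∀ x ∈ K, ∀ y ∈ A, G.Adj x y) :
    (G.induce A).cliqueNum + K.ncard ≤ (G.induce s).cliqueNum := by
  obtain ⟨Q, hQA, hQ, hcard⟩ := G.exists_isClique_ncard_eq_cliqueNum_induce A
  have := G.symm
  have hQK : G.IsClique (Q ∪ K) :=
    Set.pairwise_union_of_symm.2
      ⟨hQ, hKc, fun x hx y hy _ => (hadj y hy x (hQA hx)).symm⟩
  calc (G.induce A).cliqueNum + K.ncard = (Q ∪ K).ncard := by
        rw [Set.ncard_union_eq (hAK.mono_left hQA), hcard]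
    _ ≤ (G.induce s).cliqueNum :=
        ncard_le_cliqueNum_induce (Set.union_subset (hQA.trans hA) hK) hQK

theorem Colorable.exists_nat_coloring_of_isClique {n : ℕ} (hc : G.Colorable n) {K : Set α}
    (hK : G.IsClique K) {P R : Finset ℕ} (hPR : Disjoint P R) (hP : K.ncard ≤ P.card)
    (hR : n ≤ K.ncard + R.card) :
    ∃ f : G.Coloring ℕ, (∀ v ∈ K, f v ∈ P) ∧ ∀ v, f v ∈ P ∪ R := by
  classical
  obtain ⟨c⟩ := hc
  set S : Set (Fin n) := c '' K
  have hS : S.ncard = K.ncard := Set.InjOn.ncard_image fun x hx y hy hxy =>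
    by_contra fun hne => c.valid (hK hx hy hne) hxy
  have hSc : Sᶜ.ncard + K.ncard = n := by
    rw [← hS, add_comm, Set.ncard_add_ncard_compl, Nat.card_eq_fintype_card, Fintype.card_fin]
  have card_coe (T : Set (Fin n)) [Fintype T] : Fintype.card T = T.ncard := by
    rw [← Nat.card_eq_fintype_card, Nat.card_coe_set_eq]
  obtain ⟨e₁, he₁⟩ := Function.Embedding.exists_of_card_le_finset (α := S) (s := P)
    (by rwa [card_coe, hS])
  obtain ⟨e₂, he₂⟩ := Function.Embedding.exists_of_card_le_finset (α := ↥Sᶜ) (s := R)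
    (by rw [card_coe]; omega)
  let g : Fin n → ℕ := fun i => if h : i ∈ S then e₁ ⟨i, h⟩ else e₂ ⟨i, h⟩
  have hg : Function.Injective g := Function.Injective.dite (· ∈ S) e₁.injective
    (f' := fun i => e₂ i) e₂.injective fun h => Finset.disjoint_left.1 hPR
      (he₁ (Set.mem_range_self _)) (h ▸ he₂ (Set.mem_range_self _))
  refine ⟨G.recolorOfEmbedding ⟨g, hg⟩ c, fun v hv => ?_, fun v => ?_⟩
  · show g (c v) ∈ P
    rw [show g (c v) = e₁ ⟨c v, _⟩ from dif_pos (Set.mem_image_of_mem c hv)]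
    exact he₁ (Set.mem_range_self _)
  · show g (c v) ∈ P ∪ R
    simp only [g]
    split_ifs
    · exact Finset.mem_union_left _ (he₁ (Set.mem_range_self _))
    · exact Finset.mem_union_right _ (he₂ (Set.mem_range_self _))

theorem exists_coloring_induce_union {γ : Type*} {s t : Set α} (f : (G.induce s).Coloring γ)
    (g : (G.induce t).Coloring γ)
    (hfg : ∀ x (hx : x ∈ s) y (hy : y ∈ t), G.Adj x y → f ⟨x, hx⟩ ≠ g ⟨y, hy⟩) :
    ∃ F : (G.induce (s ∪ t)).Coloring γ, ∀ v, F v ∈ Set.range f ∪ Set.range g := by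
  classical
  let F : ↥(s ∪ t) → γ := fun v =>
    if h : v.1 ∈ s then f ⟨v, h⟩ else g ⟨v, v.2.resolve_left h⟩
  refine ⟨Coloring.mk F fun {v w} hvw => ?_, fun v => ?_⟩
  · simp only [F]
    split_ifs with hv hw hw
    · exact f.valid hvw
    · exact hfg _ hv _ _ hvw
    · exact (hfg _ hw _ _ hvw.symm).symm
    · exact g.valid hvw
  · show F v ∈ _
    simp only [F]
    split_ifs
    · exact Or.inl (Set.mem_range_self _)
    · exact Or.inr (Set.mem_range_self _)

noncomputable def induceInduceIso (G : SimpleGraph α) (s : Set α) (u : Set s) :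
    (G.induce s).induce u ≃g G.induce (Subtype.val '' u) where
  toEquiv := Equiv.Set.image Subtype.val u Subtype.val_injective
  map_rel_iff' := Iff.rfl

end SimpleGraph

open SimpleGraph

theorem isPerfect_bot {W : Type*} [Finite W] : IsPerfect (⊥ : SimpleGraph W) := by
  intro s
  rw [induce_bot]
  rcases isEmpty_or_nonempty s with hs | hs
  · obtain ⟨t, ht⟩ := (⊥ : SimpleGraph s).exists_isNClique_cliqueNum
    rw [chromaticNumber_eq_zero_of_isEmpty, ← ht.card_eq, Finset.eq_empty_of_isEmpty t]
    rfl
  · have x : s := hs.some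
    have hω : (⊥ : SimpleGraph s).cliqueNum = 1 := by
      refine le_antisymm ?_ (by simpa using (isClique_singleton x).ncard_le_cliqueNum)
      exact_mod_cast cliqueNum_le_chromaticNumber.trans_eq chromaticNumber_bot
    rw [chromaticNumber_bot, hω]
    rfl

section Induced

variable {V : Type*} [Finite V] {G : SimpleGraph V}

theorem isPerfect_induce_iff {A : Set V} :
    IsPerfect (G.induce A) ↔
      ∀ t ⊆ A, (G.induce t).chromaticNumber = (G.induce t).cliqueNum := by
  refine ⟨fun h t ht => ?_, fun h u => ?_⟩
  · have e := induceInduceIso G A (Subtype.val ⁻¹' t)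
    rw [Subtype.image_preimage_coe, Set.inter_eq_right.2 ht] at e
    rw [← chromaticNumber_congr e, ← cliqueNum_congr e]
    exact h _
  · rw [chromaticNumber_congr (induceInduceIso G A u), cliqueNum_congr (induceInduceIso G A u)]
    exact h _ (Subtype.coe_image_subset A u)

theorem GoodPartition.image_val {s : Set V} {u A B : Set s}
    (h : GoodPartition (G.induce s) u A B) :
    GoodPartition G (Subtype.val '' u) (Subtype.val '' A) (Subtype.val '' B) := by
  obtain ⟨hunion, hdisj, hA, hB⟩ := h
  refine ⟨by rw [← Set.image_union, hunion], (Set.disjoint_image_iff Subtype.val_injective).2 hdisj,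
    isPerfect_induce_iff.2 fun t ht => ?_, ?_⟩
  · have hts : t ⊆ s := ht.trans (Subtype.coe_image_subset s A)
    have := isPerfect_induce_iff.1 hA (Subtype.val ⁻¹' t) fun x hx => by
      obtain ⟨y, hy, hyx⟩ := ht hx
      rwa [← Subtype.val_injective hyx]
    rwa [chromaticNumber_congr (induceInduceIso G s _), cliqueNum_congr (induceInduceIso G s _),
      Subtype.image_preimage_coe, Set.inter_eq_right.2 hts] at this
  · rwa [← cliqueNum_congr (induceInduceIso G s B), ← cliqueNum_congr (induceInduceIso G s u)]

theorem PerfectlyDivisible.exists_goodPartition_of_induce {s : Set V}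
    (h : PerfectlyDivisible (G.induce s)) (hs : (G.induce s).edgeSet.Nonempty) :
    ∃ A B, GoodPartition G s A B := by
  obtain ⟨⟨x, y⟩, hxy⟩ := hs
  obtain ⟨A, B, hAB⟩ := h Set.univ ⟨s(⟨x, trivial⟩, ⟨y, trivial⟩), hxy⟩
  have := hAB.image_val
  rw [Set.image_univ, Subtype.range_coe] at this
  exact ⟨_, _, this⟩

theorem MNPD.not_goodPartition_univ (hG : MNPD G) (A B : Set V) :
    ¬ GoodPartition G Set.univ A B := fun hAB =>
  hG.1 fun s hs => if hsu : s = Set.univ then ⟨A, B, hsu ▸ hAB⟩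
    else (hG.2 s hsu).exists_goodPartition_of_induce hs

theorem MNPD.exists_goodPartition (hG : MNPD G) {S : Set V} (hS : S ≠ Set.univ)
    (hne : S.Nonempty) : ∃ A B, GoodPartition G S A B := by
  by_cases hedge : (G.induce S).edgeSet.Nonempty
  · exact (hG.2 S hS).exists_goodPartition_of_induce hedge
  obtain ⟨x, hx⟩ := hne
  refine ⟨S, ∅, Set.union_empty S, Set.disjoint_empty S, ?_, ?_⟩
  · rw [edgeSet_nonempty, not_not] at hedge
    rw [hedge]
    exact isPerfect_bot
  · obtain ⟨Q, hQ, -, hcard⟩ := G.exists_isClique_ncard_eq_cliqueNum_induce ∅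
    rw [← hcard, Set.subset_empty_iff.1 hQ, Set.ncard_empty]
    have h₁ := ncard_le_cliqueNum_induce (Set.singleton_subset_iff.2 hx) (G.isClique_singleton x)
    rwa [Set.ncard_singleton] at h₁

end Induced

section CliqueJoin

variable {V : Type*} {G : SimpleGraph V}

structure IsCliqueJoin (G : SimpleGraph V) (S₁ S₂ K₁ K₂ : Set V) : Prop where
  disjoint : Disjoint S₁ S₂
  subset_left : K₁ ⊆ S₁
  subset_right : K₂ ⊆ S₂
  isClique_left : G.IsClique K₁
  isClique_right : G.IsClique K₂
  adj_left : ∀ x ∈ K₁, ∀ y ∈ S₂, G.Adj x y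
  adj_right : ∀ x ∈ K₂, ∀ y ∈ S₁, G.Adj x y
  mem_of_adj : ∀ x ∈ S₁, ∀ y ∈ S₂, G.Adj x y → x ∈ K₁ ∨ y ∈ K₂

namespace IsCliqueJoin

variable {S₁ S₂ K₁ K₂ : Set V}

theorem symm (h : IsCliqueJoin G S₁ S₂ K₁ K₂) : IsCliqueJoin G S₂ S₁ K₂ K₁ :=
  ⟨h.disjoint.symm, h.subset_right, h.subset_left, h.isClique_right, h.isClique_left,
    h.adj_right, h.adj_left, fun x hx y hy hxy => (h.mem_of_adj y hy x hx hxy.symm).symm⟩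

theorem restrict (h : IsCliqueJoin G S₁ S₂ K₁ K₂) {A₁ A₂ : Set V} (h₁ : A₁ ⊆ S₁)
    (h₂ : A₂ ⊆ S₂) : IsCliqueJoin G A₁ A₂ (K₁ ∩ A₁) (K₂ ∩ A₂) where
  disjoint := h.disjoint.mono h₁ h₂
  subset_left := Set.inter_subset_right
  subset_right := Set.inter_subset_right
  isClique_left := h.isClique_left.subset Set.inter_subset_left
  isClique_right := h.isClique_right.subset Set.inter_subset_left
  adj_left x hx y hy := h.adj_left x hx.1 y (h₂ hy)
  adj_right x hx y hy := h.adj_right x hx.1 y (h₁ hy)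
  mem_of_adj x hx y hy hxy := (h.mem_of_adj x (h₁ hx) y (h₂ hy) hxy).imp (⟨·, hx⟩) (⟨·, hy⟩)

/-- Colour classes: `[0, r)` is shared by both sides, `[r, r + k₁)` is reserved for `K₁` and
`[r + k₁, r + k₁ + k₂)` for `K₂`. -/
theorem colorable (h : IsCliqueJoin G S₁ S₂ K₁ K₂) {r : ℕ}
    (h₁ : (G.induce S₁).Colorable (r + K₁.ncard)) (h₂ : (G.induce S₂).Colorable (r + K₂.ncard)) :
    (G.induce (S₁ ∪ S₂)).Colorable (r + K₁.ncard + K₂.ncard) := by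
  set k₁ := K₁.ncard
  set k₂ := K₂.ncard
  have hK₁ : (Subtype.val ⁻¹' K₁ : Set S₁).ncard = k₁ :=
    Set.ncard_preimage_of_injective_subset_range Subtype.val_injective
      (by rw [Subtype.range_coe]; exact h.subset_left)
  have hK₂ : (Subtype.val ⁻¹' K₂ : Set S₂).ncard = k₂ :=
    Set.ncard_preimage_of_injective_subset_range Subtype.val_injective
      (by rw [Subtype.range_coe]; exact h.subset_right)
  obtain ⟨f₁, hf₁K, hf₁⟩ := h₁.exists_nat_coloring_of_isClique
    (isClique_induce_iff.2 (h.isClique_left.subset (Set.image_preimage_subset _ _)))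
    (P := Finset.Ico r (r + k₁)) (R := Finset.range r)
    (Finset.disjoint_left.2 fun a ha hb => by simp at ha hb; omega) (by simp [hK₁])
    (by simp [hK₁, add_comm])
  obtain ⟨f₂, hf₂K, hf₂⟩ := h₂.exists_nat_coloring_of_isClique
    (isClique_induce_iff.2 (h.isClique_right.subset (Set.image_preimage_subset _ _)))
    (P := Finset.Ico (r + k₁) (r + k₁ + k₂)) (R := Finset.range r)
    (Finset.disjoint_left.2 fun a ha hb => by simp at ha hb; omega) (by simp [hK₂])
    (by simp [hK₂, add_comm])
  have hcross : ∀ x (hx : x ∈ S₁) y (hy : y ∈ S₂), G.Adj x y → f₁ ⟨x, hx⟩ ≠ f₂ ⟨y, hy⟩ := by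
    intro x hx y hy hxy
    have h₁ := hf₁ ⟨x, hx⟩
    have h₂ := hf₂ ⟨y, hy⟩
    rcases h.mem_of_adj x hx y hy hxy with hxK | hyK
    · have := hf₁K ⟨x, hx⟩ hxK
      simp only [Finset.mem_union, Finset.mem_Ico, Finset.mem_range] at *
      omega
    · have := hf₂K ⟨y, hy⟩ hyK
      simp only [Finset.mem_union, Finset.mem_Ico, Finset.mem_range] at *
      omega
  obtain ⟨F, hF⟩ := exists_coloring_induce_union f₁ f₂ hcross
  refine (colorable_iff_exists_bdd_nat_coloring _).2 ⟨F, fun v => ?_⟩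
  rcases hF v with ⟨w, hw⟩ | ⟨w, hw⟩
  · have := hf₁ w
    simp only [Finset.mem_union, Finset.mem_Ico, Finset.mem_range] at this
    omega
  · have := hf₂ w
    simp only [Finset.mem_union, Finset.mem_Ico, Finset.mem_range] at this
    omega

variable [Finite V]

theorem chromaticNumber_eq (h : IsCliqueJoin G S₁ S₂ K₁ K₂)
    (h₁ : (G.induce S₁).chromaticNumber = (G.induce S₁).cliqueNum)
    (h₂ : (G.induce S₂).chromaticNumber = (G.induce S₂).cliqueNum) :
    (G.induce (S₁ ∪ S₂)).chromaticNumber = (G.induce (S₁ ∪ S₂)).cliqueNum := by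
  have hk₁ := ncard_le_cliqueNum_induce h.subset_left h.isClique_left
  have hk₂ := ncard_le_cliqueNum_induce h.subset_right h.isClique_right
  have hω₁ := cliqueNum_induce_add_ncard_le Set.subset_union_left
    (h.subset_right.trans Set.subset_union_right) (h.disjoint.mono_right h.subset_right)
    h.isClique_right h.adj_right
  have hω₂ := cliqueNum_induce_add_ncard_le Set.subset_union_right
    (h.subset_left.trans Set.subset_union_left) (h.disjoint.symm.mono_right h.subset_left)
    h.isClique_left h.adj_left
  set r := max ((G.induce S₁).cliqueNum - K₁.ncard) ((G.induce S₂).cliqueNum - K₂.ncard)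
  have hc₁ : (G.induce S₁).Colorable (r + K₁.ncard) :=
    (chromaticNumber_le_iff_colorable.1 h₁.le).mono (by omega)
  have hc₂ : (G.induce S₂).Colorable (r + K₂.ncard) :=
    (chromaticNumber_le_iff_colorable.1 h₂.le).mono (by omega)
  refine le_antisymm ((h.colorable hc₁ hc₂).chromaticNumber_le.trans ?_)
    cliqueNum_le_chromaticNumber
  exact_mod_cast (by omega : r + K₁.ncard + K₂.ncard ≤ (G.induce (S₁ ∪ S₂)).cliqueNum)

theorem isPerfect (h : IsCliqueJoin G S₁ S₂ K₁ K₂) (h₁ : IsPerfect (G.induce S₁))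
    (h₂ : IsPerfect (G.induce S₂)) : IsPerfect (G.induce (S₁ ∪ S₂)) := by
  rw [isPerfect_induce_iff] at h₁ h₂ ⊢
  intro t ht
  rw [← Set.inter_eq_right.2 ht, Set.union_inter_distrib_right]
  exact (h.restrict Set.inter_subset_left Set.inter_subset_left).chromaticNumber_eq
    (h₁ _ Set.inter_subset_left) (h₂ _ Set.inter_subset_left)

theorem ncard_lt_cliqueNum_of_inter_subset (h : IsCliqueJoin G S₁ S₂ K₁ K₂) {B₁ B₂ Q : Set V}
    (hlt₂ : (G.induce B₂).cliqueNum < (G.induce S₂).cliqueNum) (hQ : Q ⊆ B₁ ∪ B₂)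
    (hQc : G.IsClique Q) (hQK : Q ∩ B₁ ⊆ K₁) : Q.ncard < (G.induce (S₁ ∪ S₂)).cliqueNum :=
  calc Q.ncard ≤ (Q ∩ B₂ ∪ Q ∩ B₁).ncard := Set.ncard_le_ncard fun x hx =>
        (hQ hx).elim (fun h => Or.inr ⟨hx, h⟩) (fun h => Or.inl ⟨hx, h⟩)
    _ ≤ (Q ∩ B₂).ncard + (Q ∩ B₁).ncard := Set.ncard_union_le _ _
    _ < (G.induce S₂).cliqueNum + (Q ∩ B₁).ncard := Nat.add_lt_add_right
        ((ncard_le_cliqueNum_induce Set.inter_subset_right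
          (hQc.subset Set.inter_subset_left)).trans_lt hlt₂) _
    _ ≤ (G.induce (S₁ ∪ S₂)).cliqueNum := cliqueNum_induce_add_ncard_le Set.subset_union_right
        ((hQK.trans h.subset_left).trans Set.subset_union_left)
        (h.disjoint.symm.mono_right (hQK.trans h.subset_left))
        (hQc.subset Set.inter_subset_left) fun x hx y hy => h.adj_left x (hQK hx) y hy

/-- A maximum clique of `B₁ ∪ B₂` meets one of the sides only inside its clique `Kᵢ`. -/
theorem cliqueNum_induce_union_lt (h : IsCliqueJoin G S₁ S₂ K₁ K₂) {B₁ B₂ : Set V}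
    (hB₁ : B₁ ⊆ S₁) (hB₂ : B₂ ⊆ S₂)
    (hlt₁ : (G.induce B₁).cliqueNum < (G.induce S₁).cliqueNum)
    (hlt₂ : (G.induce B₂).cliqueNum < (G.induce S₂).cliqueNum) :
    (G.induce (B₁ ∪ B₂)).cliqueNum < (G.induce (S₁ ∪ S₂)).cliqueNum := by
  obtain ⟨Q, hQ, hQc, hcard⟩ := G.exists_isClique_ncard_eq_cliqueNum_induce (B₁ ∪ B₂)
  rw [← hcard]
  by_cases hQK : Q ∩ B₁ ⊆ K₁
  · exact h.ncard_lt_cliqueNum_of_inter_subset hlt₂ hQ hQc hQK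
  obtain ⟨q, ⟨hqQ, hqB₁⟩, hqK⟩ := Set.not_subset.1 hQK
  have hQK₂ : Q ∩ B₂ ⊆ K₂ := fun y ⟨hyQ, hyB₂⟩ =>
    (h.mem_of_adj q (hB₁ hqB₁) y (hB₂ hyB₂)
      (hQc hqQ hyQ (h.disjoint.ne_of_mem (hB₁ hqB₁) (hB₂ hyB₂)))).resolve_left hqK
  rw [Set.union_comm S₁]
  exact h.symm.ncard_lt_cliqueNum_of_inter_subset hlt₁ (Set.union_comm B₁ B₂ ▸ hQ) hQc hQK₂

end IsCliqueJoin

theorem MNPD.not_isCliqueJoin [Finite V] (hG : MNPD G) {S₁ S₂ K₁ K₂ : Set V}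
    (hS : S₁ ∪ S₂ = Set.univ) (hne₁ : S₁.Nonempty) (hne₂ : S₂.Nonempty) :
    ¬ IsCliqueJoin G S₁ S₂ K₁ K₂ := by
  intro h
  have hS₁ : S₁ ≠ Set.univ := fun h₁ => by
    obtain ⟨x, hx⟩ := hne₂
    exact Set.disjoint_left.1 h.disjoint (h₁ ▸ Set.mem_univ x) hx
  have hS₂ : S₂ ≠ Set.univ := fun h₂ => by
    obtain ⟨x, hx⟩ := hne₁
    exact Set.disjoint_right.1 h.disjoint (h₂ ▸ Set.mem_univ x) hx
  obtain ⟨A₁, B₁, hu₁, hd₁, hA₁, hB₁⟩ := hG.exists_goodPartition hS₁ hne₁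
  obtain ⟨A₂, B₂, hu₂, hd₂, hA₂, hB₂⟩ := hG.exists_goodPartition hS₂ hne₂
  have hA₁S : A₁ ⊆ S₁ := hu₁ ▸ Set.subset_union_left
  have hB₁S : B₁ ⊆ S₁ := hu₁ ▸ Set.subset_union_right
  have hA₂S : A₂ ⊆ S₂ := hu₂ ▸ Set.subset_union_left
  have hB₂S : B₂ ⊆ S₂ := hu₂ ▸ Set.subset_union_right
  refine hG.not_goodPartition_univ (A₁ ∪ A₂) (B₁ ∪ B₂)
    ⟨by rw [Set.union_union_union_comm, hu₁, hu₂, hS], ?_,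
      (h.restrict hA₁S hA₂S).isPerfect hA₁ hA₂,
      hS ▸ h.cliqueNum_induce_union_lt hB₁S hB₂S hB₁ hB₂⟩
  exact Set.disjoint_union_left.2 ⟨Set.disjoint_union_right.2 ⟨hd₁, h.disjoint.mono hA₁S hB₂S⟩,
    Set.disjoint_union_right.2 ⟨(h.disjoint.mono hB₁S hA₂S).symm, hd₂⟩⟩

end CliqueJoin

section CliqueSeparation

variable {V : Type*} {G : SimpleGraph V}

def IsMixedOnEdgeIn (G : SimpleGraph V) (c : V) (S : Set V) : Prop :=
  ∃ x ∈ S, ∃ y ∈ S, G.Adj x y ∧ G.Adj c y ∧ ¬ G.Adj c x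

theorem P5Free.not_isInducedPath {a b c d e : V} (hP5 : P5Free G)
    (hab : G.Adj a b) (hbc : G.Adj b c) (hcd : G.Adj c d) (hde : G.Adj d e)
    (hac : ¬ G.Adj a c) (had : ¬ G.Adj a d) (hae : ¬ G.Adj a e)
    (hbd : ¬ G.Adj b d) (hbe : ¬ G.Adj b e) (hce : ¬ G.Adj c e) : False := by
  let f : Fin 5 → V := ![a, b, c, d, e]
  have hf : ∀ i j, G.Adj (f i) (f j) ↔ (pathGraph 5).Adj i j := by
    intro i j
    fin_cases i <;> fin_cases j <;>
      simp [f, pathGraph_adj, hab, hbc, hcd, hde, hab.symm, hbc.symm, hcd.symm, hde.symm,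
        hac, had, hae, hbd, hbe, hce, G.adj_comm c a, G.adj_comm d a, G.adj_comm e a,
        G.adj_comm d b, G.adj_comm e b, G.adj_comm e c]
  have twins : ∀ i j : Fin 5, (∀ k, (pathGraph 5).Adj i k ↔ (pathGraph 5).Adj j k) → i = j := by
    simp only [pathGraph_adj]
    decide
  have hinj : Function.Injective f := fun i j hij => twins i j fun k => by rw [← hf, ← hf, hij]
  exact hP5 _ ⟨Embedding.isoInduceRange ⟨⟨f, hinj⟩, hf _ _⟩⟩

theorem P5Free.not_isMixedOnEdgeIn_and {c : V} {V₁ V₂ : Set V} (hP5 : P5Free G)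
    (hV : ∀ x ∈ V₁, ∀ y ∈ V₂, ¬ G.Adj x y) :
    ¬ (IsMixedOnEdgeIn G c V₁ ∧ IsMixedOnEdgeIn G c V₂) := by
  rintro ⟨⟨x, hx, y, hy, hxy, hcy, hcx⟩, ⟨w, hw, u, hu, hwu, hcu, hcw⟩⟩
  exact hP5.not_isInducedPath hxy hcy.symm hcu hwu.symm (fun h => hcx h.symm)
    (hV x hx u hu) (hV x hx w hw) (hV y hy u hu) (hV y hy w hw) hcw

structure IsCliqueSeparation (G : SimpleGraph V) (C V₁ V₂ : Set V) : Prop where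
  isClique : G.IsClique C
  nonempty_left : V₁.Nonempty
  nonempty_right : V₂.Nonempty
  disjoint : Disjoint V₁ V₂
  union_eq : V₁ ∪ V₂ = Cᶜ
  not_adj : ∀ x ∈ V₁, ∀ y ∈ V₂, ¬ G.Adj x y

namespace IsCliqueSeparation

variable {C V₁ V₂ : Set V}

theorem symm (h : IsCliqueSeparation G C V₁ V₂) : IsCliqueSeparation G C V₂ V₁ :=
  ⟨h.isClique, h.nonempty_right, h.nonempty_left, h.disjoint.symm,
    by rw [Set.union_comm, h.union_eq], fun x hx y hy hxy => h.not_adj y hy x hx hxy.symm⟩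

theorem notMem_of_mem_left (h : IsCliqueSeparation G C V₁ V₂) {x : V} (hx : x ∈ V₁) : x ∉ C :=
  h.union_eq.subset (Or.inl hx)

theorem notMem_of_mem_right (h : IsCliqueSeparation G C V₁ V₂) {x : V} (hx : x ∈ V₂) : x ∉ C :=
  h.union_eq.subset (Or.inr hx)

theorem diff_singleton (h : IsCliqueSeparation G C V₁ V₂) {c x : V} (hc : c ∈ C) (hx : x ∈ V₁)
    (hcx : ¬ G.Adj c x) (hmixed : ¬ IsMixedOnEdgeIn G c V₁) :
    IsCliqueSeparation G (C \ {c}) {y ∈ V₁ | ¬ G.Adj c y}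
      (V₂ ∪ insert c {y ∈ V₁ | G.Adj c y}) where
  isClique := h.isClique.subset Set.sdiff_subset
  nonempty_left := ⟨x, hx, hcx⟩
  nonempty_right := ⟨c, Or.inr (Set.mem_insert c _)⟩
  disjoint := by
    refine Set.disjoint_left.2 fun y ⟨hy, hcy⟩ hy' => ?_
    rcases hy' with hy₂ | rfl | ⟨-, hcy'⟩
    · exact Set.disjoint_left.1 h.disjoint hy hy₂
    · exact h.notMem_of_mem_left hy hc
    · exact hcy hcy'
  union_eq := by
    ext y
    have hy := Set.ext_iff.1 h.union_eq y
    by_cases hyc : y = c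
    · subst hyc
      simp [hc]
    · by_cases hcy : G.Adj c y <;> simp_all [or_comm]
  not_adj := by
    rintro y ⟨hy, hcy⟩ z (hz | rfl | ⟨hz, hcz⟩) hyz
    · exact h.not_adj y hy z hz hyz
    · exact hcy hyz.symm
    · exact hmixed ⟨y, hy, z, hz, hyz, hcz, hcy⟩

theorem isCliqueJoin (h : IsCliqueSeparation G C V₁ V₂)
    (hsplit : ∀ c ∈ C, (∀ x ∈ V₁, G.Adj c x) ∨ ∀ x ∈ V₂, G.Adj c x) :
    IsCliqueJoin G (V₁ ∪ {c ∈ C | ¬ ∀ x ∈ V₁, G.Adj c x}) (V₂ ∪ {c ∈ C | ∀ x ∈ V₁, G.Adj c x})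
      {c ∈ C | ¬ ∀ x ∈ V₁, G.Adj c x} {c ∈ C | ∀ x ∈ V₁, G.Adj c x} where
  disjoint := by
    refine Set.disjoint_left.2 ?_
    rintro y (hy₁ | ⟨hyC, hy⟩) (hy₂ | ⟨hyC', hy'⟩)
    · exact Set.disjoint_left.1 h.disjoint hy₁ hy₂
    · exact h.notMem_of_mem_left hy₁ hyC'
    · exact h.notMem_of_mem_right hy₂ hyC
    · exact hy hy'
  subset_left := Set.subset_union_right
  subset_right := Set.subset_union_right
  isClique_left := h.isClique.subset (Set.sep_subset _ _)
  isClique_right := h.isClique.subset (Set.sep_subset _ _)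
  adj_left := by
    rintro x ⟨hxC, hx⟩ y (hy | ⟨hyC, hy⟩)
    · exact (hsplit x hxC).resolve_left hx y hy
    · exact h.isClique hxC hyC fun hxy => hx (hxy ▸ hy)
  adj_right := by
    rintro x ⟨hxC, hx⟩ y (hy | ⟨hyC, hy⟩)
    · exact hx y hy
    · exact h.isClique hxC hyC fun hxy => hy (hxy ▸ hx)
  mem_of_adj := by
    rintro x (hx | hx) y (hy | hy) hxy
    · exact absurd hxy (h.not_adj x hx y hy)
    · exact Or.inr hy
    · exact Or.inl hx
    · exact Or.inl hx

theorem not_mnpd [Finite V] (h : IsCliqueSeparation G C V₁ V₂)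
    (hsplit : ∀ c ∈ C, (∀ x ∈ V₁, G.Adj c x) ∨ ∀ x ∈ V₂, G.Adj c x) : ¬ MNPD G := by
  refine fun hG => hG.not_isCliqueJoin ?_ (h.nonempty_left.mono Set.subset_union_left)
    (h.nonempty_right.mono Set.subset_union_left) (h.isCliqueJoin hsplit)
  refine Set.eq_univ_of_forall fun y => ?_
  have hy := Set.ext_iff.1 h.union_eq y
  by_cases hyC : y ∈ C <;> by_cases hy₁ : ∀ x ∈ V₁, G.Adj y x <;> simp_all

end IsCliqueSeparation

theorem P5Free.exists_isCliqueSeparation_forall_complete [Finite V] (hP5 : P5Free G)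
    {C V₁ V₂ : Set V} (h : IsCliqueSeparation G C V₁ V₂) :
    ∃ C' V₁' V₂', IsCliqueSeparation G C' V₁' V₂' ∧
      ∀ c ∈ C', (∀ x ∈ V₁', G.Adj c x) ∨ ∀ x ∈ V₂', G.Adj c x := by
  induction hn : C.ncard using Nat.strong_induction_on generalizing C V₁ V₂ with
  | _ n ih =>
  by_cases hsplit : ∀ c ∈ C, (∀ x ∈ V₁, G.Adj c x) ∨ ∀ x ∈ V₂, G.Adj c x
  · exact ⟨C, V₁, V₂, h, hsplit⟩
  push Not at hsplit
  obtain ⟨c, hc, ⟨x₁, hx₁, hcx₁⟩, ⟨x₂, hx₂, hcx₂⟩⟩ := hsplit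
  have hlt : (C \ {c}).ncard < n := hn ▸ Set.ncard_sdiff_singleton_lt_of_mem hc
  by_cases h₁ : IsMixedOnEdgeIn G c V₁
  · have h₂ : ¬ IsMixedOnEdgeIn G c V₂ := fun h₂ => hP5.not_isMixedOnEdgeIn_and h.not_adj ⟨h₁, h₂⟩
    exact ih _ hlt (h.symm.diff_singleton hc hx₂ hcx₂ h₂) rfl
  · exact ih _ hlt (h.diff_singleton hc hx₁ hcx₁ h₁) rfl

end CliqueSeparation

/-- A `P₅`-free minimally non-perfectly divisible graph cannot contain a clique cutset. -/
theorem no_clique_cutset_in_P5_free_MNPD {V : Type*} [Fintype V] (G : SimpleGraph V)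
    (hP5 : P5Free G) (hmnpd : MNPD G) :
    ∀ C : Set V, ¬ IsCliqueCutset G C := by
  rintro C ⟨hC, V₁, V₂, h₁, h₂, hd, hu, hna⟩
  obtain ⟨C', V₁', V₂', hsep, hsplit⟩ :=
    hP5.exists_isCliqueSeparation_forall_complete ⟨hC, h₁, h₂, hd, hu, hna⟩
  exact hsep.not_mnpd hsplit hmnpd
end

section
/- The chromatic number of a k-divisible graph G is at most k^(ω(G) − 1), i.e., χ(G) ≤ k^(ω(G)−1) for every k-divisible graph G. -/
/-!
Induction on the clique number: a subgraph `G[s]` with an edge is covered by `k` parts of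
strictly smaller clique number, each of which is `k ^ (ω(G[s]) - 2)`-colourable by induction;
pairing the index of a vertex's part with its colour in that part colours `G[s]` with
`k * k ^ (ω(G[s]) - 2)` colours. Edgeless subgraphs need only one colour.
-/

open SimpleGraph

/-- A graph `G` with at least one edge is `k`-divisible if the vertex set of every
induced subgraph `H` of `G` with at least one edge can be partitioned into `k` sets,
none of which contains a largest clique of `H`. -/
def KDivisible {W : Type*} (k : ℕ) (G : SimpleGraph W) : Prop :=
  G.edgeSet.Nonempty ∧ ∀ s : Set W, (G.induce s).edgeSet.Nonempty →
    ∃ P : Fin k → Set W, (⋃ i, P i) = s ∧ Pairwise (Function.onFun Disjoint P) ∧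
      ∀ i, (G.induce (P i)).cliqueNum < (G.induce s).cliqueNum

namespace SimpleGraph

variable {V : Type*} {G : SimpleGraph V}

lemma eq_bot_of_cliqueNum_le_one [Finite V] (h : G.cliqueNum ≤ 1) : G = ⊥ :=
  cliqueFree_two.1 fun _ ht ↦ by
    have := ht.card_eq ▸ ht.isClique.card_le_cliqueNum
    omega

lemma colorable_induce_of_subset_iUnion {ι : Type*} [Fintype ι] {s : Set V} {P : ι → Set V}
    {m : ℕ} (hs : s ⊆ ⋃ i, P i) (hP : ∀ i, (G.induce (P i)).Colorable m) :
    (G.induce s).Colorable (Fintype.card ι * m) := by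
  have c i := (hP i).some
  have hmem (v : s) : ∃ i, (v : V) ∈ P i := Set.mem_iUnion.1 (hs v.2)
  choose idx hidx using hmem
  -- phrased with `i = j` so that it applies to `idx v = idx w` without a dependent rewrite
  have hvalid {v w : s} (hvw : (G.induce s).Adj v w) {i j : ι} (hij : i = j) (hv : (v : V) ∈ P i)
      (hw : (w : V) ∈ P j) : c i ⟨v, hv⟩ ≠ c j ⟨w, hw⟩ := by
    subst hij
    exact (c i).valid (show G.Adj v w from hvw)
  let C : (G.induce s).Coloring (ι × Fin m) :=
    Coloring.mk (fun v ↦ (idx v, c (idx v) ⟨v, hidx v⟩)) fun hvw heq ↦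
      hvalid hvw (congrArg Prod.fst heq) _ _ (congrArg Prod.snd heq)
  simpa using C.colorable

lemma colorable_induce_pow_of_cover {ι : Type*} [Fintype ι] [Nonempty ι] [Finite V]
    (hcover : ∀ s : Set V, G.induce s ≠ ⊥ → ∃ P : ι → Set V,
      s ⊆ ⋃ i, P i ∧ ∀ i, (G.induce (P i)).cliqueNum < (G.induce s).cliqueNum)
    (n : ℕ) {s : Set V} (hs : (G.induce s).cliqueNum ≤ n + 1) :
    (G.induce s).Colorable (Fintype.card ι ^ n) := by
  induction n generalizing s with
  | zero => simpa [colorable_one_iff] using eq_bot_of_cliqueNum_le_one hs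
  | succ n ih =>
    by_cases hbot : G.induce s = ⊥
    · exact (colorable_one_iff.2 hbot).mono (Nat.one_le_pow _ _ Fintype.card_pos)
    obtain ⟨P, hsP, hP⟩ := hcover s hbot
    rw [pow_succ']
    exact colorable_induce_of_subset_iUnion hsP fun i ↦ ih (by have := hP i; omega)

end SimpleGraph

lemma KDivisible.pos {V : Type*} {k : ℕ} {G : SimpleGraph V} (h : KDivisible k G) : 0 < k := by
  obtain ⟨⟨e, he⟩, hdiv⟩ := h
  induction e using Sym2.ind with | h a b =>
  obtain ⟨P, hP, -⟩ := hdiv Set.univ ⟨s(⟨a, trivial⟩, ⟨b, trivial⟩), he⟩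
  obtain ⟨i, -⟩ := Set.mem_iUnion.1 (hP ▸ Set.mem_univ a)
  exact i.pos

/-- The chromatic number of a `k`-divisible graph `G` is at most `k ^ (ω(G) - 1)`. -/
theorem chromatic_le_pow_of_kDivisible {V : Type*} [Fintype V]
    (k : ℕ) (G : SimpleGraph V) (h : KDivisible k G) :
    G.chromaticNumber ≤ (k ^ (G.cliqueNum - 1) : ℕ) := by
  have : NeZero k := ⟨h.pos.ne'⟩
  have hcover (s : Set V) (hs : G.induce s ≠ ⊥) : ∃ P : Fin k → Set V,
      s ⊆ ⋃ i, P i ∧ ∀ i, (G.induce (P i)).cliqueNum < (G.induce s).cliqueNum := by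
    obtain ⟨P, hPs, -, hP⟩ := h.2 s (edgeSet_nonempty.2 hs)
    exact ⟨P, hPs.ge, hP⟩
  have hω : (G.induce Set.univ).cliqueNum ≤ G.cliqueNum - 1 + 1 := by
    have := G.cliqueNum_induce_le Set.univ
    omega
  have hcol := colorable_induce_pow_of_cover hcover _ hω
  rw [Fintype.card_fin] at hcol
  exact ((colorable_congr G.induceUnivIso).1 hcol).chromaticNumber_le
end

section
/- If G is a graph whose independence number satisfies α(G) ≤ 2 (G is 3K1-free), then G is perfectly divisible. -/
/-! The vertex set of an induced subgraph `G[s]` with an edge is split at any vertex `v ∈ s` into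
its non-neighbours `A` (containing `v`) and its neighbours `B`. As `α(G) ≤ 2`, two nonadjacent
vertices of `A \ {v}` would form a stable triple with `v`, so all edges of `G[A]` lie in the clique
`A \ {v}`; such a graph is perfect, since colouring that clique injectively and every other vertex
like one vertex of it is proper. Adding `v` to a maximum clique of `G[B]` shows `ω(G[B]) < ω(G[s])`. -/

open SimpleGraph

namespace SimpleGraph

variable {α : Type*} {G : SimpleGraph α}

lemma exists_isNClique_cliqueNum_induce (s : Set α) :
    ∃ t : Finset α, ↑t ⊆ s ∧ G.IsNClique (G.induce s).cliqueNum t := by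
  obtain ⟨t, ht⟩ := (G.induce s).exists_isNClique_cliqueNum
  refine ⟨t.map (.subtype _), ?_, (isNClique_induce_iff s t _).mp ht⟩
  simp

lemma IsClique.card_le_cliqueNum_induce [Finite α] {s : Set α} {t : Finset α}
    (ht : G.IsClique t) (hts : ↑t ⊆ s) : t.card ≤ (G.induce s).cliqueNum := by
  classical
  have hmap : (t.subtype (· ∈ s)).map (.subtype _) = t := by
    ext x; simpa using fun hx => hts hx
  have hclique : (G.induce s).IsNClique t.card (t.subtype (· ∈ s)) := by
    rw [isNClique_induce_iff, hmap]; exact ⟨ht, rfl⟩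
  exact hclique.card_eq ▸ hclique.isClique.card_le_cliqueNum

lemma cliqueNum_induce_lt_of_forall_adj [Finite α] {s B : Set α} {v : α} (hv : v ∈ s)
    (hBs : B ⊆ s) (hadj : ∀ x ∈ B, G.Adj v x) :
    (G.induce B).cliqueNum < (G.induce s).cliqueNum := by
  classical
  obtain ⟨t, htB, ht⟩ := exists_isNClique_cliqueNum_induce (G := G) B
  have hvt : ∀ x ∈ t, G.Adj v x := fun x hx => hadj x (htB hx)
  have hclique := ht.insert hvt
  calc (G.induce B).cliqueNum < (G.induce B).cliqueNum + 1 := Nat.lt_succ_self _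
    _ = (insert v t).card := hclique.card_eq.symm
    _ ≤ (G.induce s).cliqueNum := by
      refine hclique.isClique.card_le_cliqueNum_induce ?_
      rw [Finset.coe_insert]
      exact Set.insert_subset hv (htB.trans hBs)

lemma colorable_card_of_support_subset {K : Finset α} (hK : K.Nonempty)
    (hsupp : G.support ⊆ K) : G.Colorable K.card := by
  classical
  obtain ⟨k₀, hk₀⟩ := hK
  let C : G.Coloring K := Coloring.mk (fun x => if hx : x ∈ K then ⟨x, hx⟩ else ⟨k₀, hk₀⟩)
    fun {a b} hab => by
      have ha : a ∈ K := hsupp ⟨b, hab⟩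
      have hb : b ∈ K := hsupp ⟨a, hab.symm⟩
      simpa [ha, hb] using hab.ne
  simpa using C.colorable

lemma chromaticNumber_eq_cliqueNum_of_isClique_support [Finite α] (h : G.IsClique G.support) :
    G.chromaticNumber = G.cliqueNum := by
  classical
  have := Fintype.ofFinite α
  refine le_antisymm ?_ G.cliqueNum_le_chromaticNumber
  cases isEmpty_or_nonempty α with
  | inl _ => exact (Colorable.of_isEmpty (G := G) _).chromaticNumber_le
  | inr hne =>
    obtain ⟨K, hK, hKclique, hsupp⟩ :
        ∃ K : Finset α, K.Nonempty ∧ G.IsClique K ∧ G.support ⊆ K := by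
      rcases G.support.eq_empty_or_nonempty with hempty | ⟨x, hx⟩
      · obtain ⟨x⟩ := hne
        exact ⟨{x}, Finset.singleton_nonempty x, by simp, by simp [hempty]⟩
      · exact ⟨G.support.toFinset, ⟨x, by simpa using hx⟩, by simpa using h, by simp⟩
    exact ((colorable_card_of_support_subset hK hsupp).mono
      hKclique.card_le_cliqueNum).chromaticNumber_le

lemma isClique_support_induce (h : G.IsClique G.support) (s : Set α) :
    (G.induce s).IsClique (G.induce s).support := by
  rintro x ⟨y, hxy⟩ x' ⟨y', hxy'⟩ hne
  exact h ⟨y, hxy⟩ ⟨y', hxy'⟩ (Subtype.val_injective.ne hne)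

lemma isPerfect_of_isClique_support [Finite α] (h : G.IsClique G.support) : IsPerfect G :=
  fun s => chromaticNumber_eq_cliqueNum_of_isClique_support (isClique_support_induce h s)

lemma isClique_support_induce_of_forall_not_adj (hG : Gᶜ.CliqueFree 3) {v : α} {A : Set α}
    (hA : ∀ x ∈ A, ¬ G.Adj v x) : (G.induce A).IsClique (G.induce A).support := by
  classical
  have hne_v : ∀ x ∈ (G.induce A).support, (x : α) ≠ v := by
    rintro x ⟨y, hxy⟩ rfl
    exact hA y y.2 hxy
  intro x hx y hy hxy
  by_contra hnadj
  refine hG {v, (x : α), (y : α)} (is3Clique_triple_iff.mpr ⟨?_, ?_, ?_⟩)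
  · exact (compl_adj G _ _).mpr ⟨(hne_v x hx).symm, hA x x.2⟩
  · exact (compl_adj G _ _).mpr ⟨(hne_v y hy).symm, hA y y.2⟩
  · exact (compl_adj G _ _).mpr ⟨Subtype.val_injective.ne hxy, hnadj⟩

end SimpleGraph

/-- A graph with independence number at most 2 (i.e. a `3K₁`-free graph, whose
complement has no 3-clique) is perfectly divisible. -/
theorem perfectlyDivisible_of_indepNum_le_two {V : Type*} [Fintype V]
    (G : SimpleGraph V) (halpha : Gᶜ.CliqueFree 3) :
    PerfectlyDivisible G := by
  intro s hs
  obtain ⟨⟨v, hv⟩, -, -⟩ := ne_bot_iff_exists_adj.mp (edgeSet_nonempty.mp hs)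
  refine ⟨{x ∈ s | ¬ G.Adj v x}, {x ∈ s | G.Adj v x}, ?_, ?_, ?_, ?_⟩
  · ext x; by_cases hx : G.Adj v x <;> simp [hx]
  · exact Set.disjoint_left.mpr fun x hA hB => hA.2 hB.2
  · exact isPerfect_of_isClique_support
      (isClique_support_induce_of_forall_not_adj halpha fun x hx => hx.2)
  · exact cliqueNum_induce_lt_of_forall_adj hv (Set.sep_subset _ _) fun x hx => hx.2
end
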